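/- arXiv:1606.08606 — 9 statements merged into one kernel-verified Lean document; each statement's English description precedes it below -/
import Mathlib

section
/- Condition (Y2) implies condition (Y3): if for every ε>0 there exist s₀, n₀ such that B_{s+n} < ε(B_s + ⋯ + B_{s+n}) for all n ≥ n₀ and s ≥ s₀, then for every ε₁ > 0 and every m ∈ ℤ₊ there exists N such that B_{s+n-m} + ⋯ + B_{s+n} < ε₁(B_s + ⋯ + B_{s+n-m-1} + ⋯ + B_{s+n}) for all n ≥ N and s ≥ 1. -/
/-! Applying (Y2) with ε = ε₁ / (m + 1) from the base point max s s₀ makes every one of the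
last m + 1 terms of a long enough block smaller than ε₁ / (m + 1) times the block sum, uniformly
in the starting index s; adding these m + 1 bounds gives (Y3). -/

open Finset

lemma sum_Icc_le_sum_Icc_of_le {B : ℕ → ℝ} (hB : ∀ k, 0 ≤ B k) {a b c d : ℕ}
    (hca : c ≤ a) (hbd : b ≤ d) :
    ∑ k ∈ Icc a b, B k ≤ ∑ k ∈ Icc c d, B k :=
  sum_le_sum_of_subset_of_nonneg (Icc_subset_Icc hca hbd) fun k _ _ => hB k

lemma exists_forall_lt_mul_sum_Icc {B : ℕ → ℝ} (hB : ∀ k, 0 ≤ B k)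
    (hY2 : ∀ ε : ℝ, 0 < ε → ∃ s₀ n₀ : ℕ, ∀ n ≥ n₀, ∀ s ≥ s₀,
      B (s + n) < ε * ∑ k ∈ Icc s (s + n), B k)
    {ε : ℝ} (hε : 0 < ε) :
    ∃ N : ℕ, ∀ s k, s + N ≤ k → B k < ε * ∑ i ∈ Icc s k, B i := by
  obtain ⟨s₀, n₀, hY⟩ := hY2 ε hε
  refine ⟨s₀ + n₀, fun s k hk => ?_⟩
  have hbase : max s s₀ + (k - max s s₀) = k := by omega
  calc B k < ε * ∑ i ∈ Icc (max s s₀) k, B i := by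
        simpa only [hbase] using hY (k - max s s₀) (by omega) (max s s₀) (le_max_right _ _)
    _ ≤ ε * ∑ i ∈ Icc s k, B i :=
        mul_le_mul_of_nonneg_left (sum_Icc_le_sum_Icc_of_le hB (le_max_left _ _) le_rfl) hε.le

/-- (Y2) implies (Y3) (modified form): if for every ε>0 there exist s₀, n₀ such that
B_{s+n} < ε·(B_s + ⋯ + B_{s+n}) for n ≥ n₀, s ≥ s₀, then for every ε₁>0 and every m
there is N such that B_{s+n-m} + ⋯ + B_{s+n} < ε₁·(B_s + ⋯ + B_{s+n}) for n ≥ N, s ≥ 1. -/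
theorem stmt0 (B : ℕ → ℝ) (hBpos : ∀ k, 0 < B k)
    (hY2 : ∀ ε : ℝ, 0 < ε → ∃ s₀ n₀ : ℕ, ∀ n ≥ n₀, ∀ s ≥ s₀,
      B (s + n) < ε * ∑ k ∈ Finset.Icc s (s + n), B k) :
    ∀ ε₁ : ℝ, 0 < ε₁ → ∀ m : ℕ, ∃ N : ℕ, ∀ n ≥ N, ∀ s ≥ 1,
      (∑ k ∈ Finset.Icc (s + n - m) (s + n), B k)
        < ε₁ * ∑ k ∈ Finset.Icc s (s + n), B k := by
  intro ε₁ hε₁ m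
  have hB : ∀ k, 0 ≤ B k := fun k => (hBpos k).le
  obtain ⟨N, hN⟩ := exists_forall_lt_mul_sum_Icc hB hY2 (ε := ε₁ / (m + 1)) (by positivity)
  refine ⟨N + m, fun n hn s _ => ?_⟩
  have htail : ∀ k ∈ Icc (s + n - m) (s + n),
      B k < ε₁ / (m + 1) * ∑ i ∈ Icc s (s + n), B i := by
    intro k hk
    rw [mem_Icc] at hk
    exact (hN s k (by omega)).trans_le <| mul_le_mul_of_nonneg_left
      (sum_Icc_le_sum_Icc_of_le hB le_rfl hk.2) (by positivity)
  have hcard : #(Icc (s + n - m) (s + n)) = m + 1 := by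
    rw [Nat.card_Icc]
    omega
  calc ∑ k ∈ Icc (s + n - m) (s + n), B k
      < ∑ _k ∈ Icc (s + n - m) (s + n), ε₁ / (m + 1) * ∑ i ∈ Icc s (s + n), B i :=
        sum_lt_sum_of_nonempty (nonempty_Icc.2 (by omega)) htail
    _ = ε₁ * ∑ i ∈ Icc s (s + n), B i := by
        rw [sum_const, hcard, nsmul_eq_mul]
        field_simp
        push_cast
        ring
end

section
/- Conditions (Y2) and (Y4) are equivalent for sequences of positive reals: (∀ε>0 ∃s₀,n₀: B_{s+n} < ε(B_s+⋯+B_{s+n}) for n≥n₀, s≥s₀) if and only if (∀ε>0 ∃m,n₀,s₀: B_{s+n} < ε(B_{s+n-m}+⋯+B_{s+n-1}) for n≥n₀, s≥s₀). -/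
/-!
(Y4) ⟹ (Y2): the window `[s+n-m, s+n-1]` lies inside `[s, s+n]` once `n ≥ m`, and the terms are
nonnegative. (Y2) ⟹ (Y4): apply (Y2) with `ε / (1 + ε)` to the window `[s+n-m, s+n]` of fixed length
`m = max n₀ 1`; solving `x < ε / (1 + ε) * (S + x)` for `x` gives `x < ε * S`.
-/

open Finset

/-- Condition (Y2). -/
def EventuallySmallVsSums (B : ℕ → ℝ) : Prop :=
  ∀ ε : ℝ, 0 < ε → ∃ s₀ n₀ : ℕ, ∀ n ≥ n₀, ∀ s ≥ s₀,
    B (s + n) < ε * ∑ k ∈ Icc s (s + n), B k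

/-- Condition (Y4). -/
def EventuallySmallVsWindows (B : ℕ → ℝ) : Prop :=
  ∀ ε : ℝ, 0 < ε → ∃ m n₀ s₀ : ℕ, ∀ n ≥ n₀, ∀ s ≥ s₀,
    B (s + n) < ε * ∑ k ∈ Icc (s + n - m) (s + n - 1), B k

lemma lt_mul_of_lt_div_one_add_mul {x S ε : ℝ} (hε : 0 < ε)
    (h : x < ε / (1 + ε) * (S + x)) : x < ε * S := by
  have hε₁ : 0 < 1 + ε := by linarith
  rw [div_mul_eq_mul_div, lt_div_iff₀ hε₁] at h
  linarith

lemma sum_Icc_window_le_sum_Icc {B : ℕ → ℝ} (hB : ∀ k, 0 ≤ B k) {m n : ℕ} (hmn : m ≤ n)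
    (s : ℕ) : ∑ k ∈ Icc (s + n - m) (s + n - 1), B k ≤ ∑ k ∈ Icc s (s + n), B k :=
  sum_le_sum_of_subset_of_nonneg (Icc_subset_Icc (by omega) (by omega))
    fun k _ _ => hB k

lemma EventuallySmallVsSums.eventuallySmallVsWindows {B : ℕ → ℝ}
    (h : EventuallySmallVsSums B) : EventuallySmallVsWindows B := by
  intro ε hε
  obtain ⟨s₀, n₀, H⟩ := h (ε / (1 + ε)) (div_pos hε (by linarith))
  set m := max n₀ 1
  refine ⟨m, m, s₀, fun n hn s hs => ?_⟩
  have hwindow := H m (le_max_left _ _) (s + n - m) (by omega)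
  have hend : s + n - m + m = s + n - 1 + 1 := by omega
  rw [hend, sum_Icc_succ_top (by omega), ← hend, show s + n - m + m = s + n by omega] at hwindow
  exact lt_mul_of_lt_div_one_add_mul hε hwindow

lemma EventuallySmallVsWindows.eventuallySmallVsSums {B : ℕ → ℝ} (hB : ∀ k, 0 ≤ B k)
    (h : EventuallySmallVsWindows B) : EventuallySmallVsSums B := by
  intro ε hε
  obtain ⟨m, n₀, s₀, H⟩ := h ε hε
  refine ⟨s₀, max n₀ m, fun n hn s hs => ?_⟩
  exact (H n (le_of_max_le_left hn) s hs).trans_le <|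
    mul_le_mul_of_nonneg_left (sum_Icc_window_le_sum_Icc hB (le_of_max_le_right hn) s) hε.le

/-- (Y2) and (Y4) are equivalent: for a sequence of positive reals,
(∀ε>0 ∃s₀,n₀: B_{s+n} < ε(B_s+⋯+B_{s+n}) for n≥n₀, s≥s₀) iff
(∀ε>0 ∃m,n₀,s₀: B_{s+n} < ε(B_{s+n-m}+⋯+B_{s+n-1}) for n≥n₀, s≥s₀). -/
theorem stmt1 (B : ℕ → ℝ) (hBpos : ∀ k, 0 < B k) :
    (∀ ε : ℝ, 0 < ε → ∃ s₀ n₀ : ℕ, ∀ n ≥ n₀, ∀ s ≥ s₀,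
      B (s + n) < ε * ∑ k ∈ Finset.Icc s (s + n), B k) ↔
    (∀ ε : ℝ, 0 < ε → ∃ m n₀ s₀ : ℕ, ∀ n ≥ n₀, ∀ s ≥ s₀,
      B (s + n) < ε * ∑ k ∈ Finset.Icc (s + n - m) (s + n - 1), B k) :=
  ⟨EventuallySmallVsSums.eventuallySmallVsWindows,
    EventuallySmallVsWindows.eventuallySmallVsSums fun k => (hBpos k).le⟩
end

section
/- If β_k := (log B_k)/k is positive and nondecreasing with β_k ↗ β < ∞, then for all s and n, B_{s+n}/(B_s + ⋯ + B_{s+n}) > (e^{β_1} - 1)/e^{β} > 0; in particular condition (Y) fails. -/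
/-!
Put `q = exp (β m)` for the right end `m` of the window `[s, m]`. Monotonicity of `β` gives
`B k = exp (β k) ^ k ≤ q ^ k` for `k ≤ m`, with equality at `k = m`, so the window sum is dominated
by a geometric series and `B m / ∑ B k > (q - 1) / q`. Since `exp (β 1) ≤ q ≤ exp βlim`, this ratio
exceeds `(exp (β 1) - 1) / exp βlim`, a positive constant independent of the window.
-/

open Finset Filter Real

theorem geom_sum_Icc_lt {q : ℝ} (hq : 1 < q) (s m : ℕ) :
    ∑ k ∈ Icc s m, q ^ k < q ^ (m + 1) / (q - 1) := by
  have hq₀ : 0 < q - 1 := sub_pos.2 hq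
  calc ∑ k ∈ Icc s m, q ^ k
      ≤ ∑ k ∈ range (m + 1), q ^ k :=
        sum_le_sum_of_subset_of_nonneg
          (fun k hk => mem_range.2 (Nat.lt_succ_of_le (mem_Icc.1 hk).2))
          (fun k _ _ => by positivity)
    _ = (q ^ (m + 1) - 1) / (q - 1) := geom_sum_eq hq.ne' _
    _ < q ^ (m + 1) / (q - 1) := div_lt_div_of_pos_right (by linarith) hq₀

theorem sub_one_div_lt_div_sum_Icc {q : ℝ} (hq : 1 < q) {b : ℕ → ℝ} {s m : ℕ} (hsm : s ≤ m)
    (hb₀ : ∀ k ∈ Icc s m, 0 ≤ b k) (hbq : ∀ k ∈ Icc s m, b k ≤ q ^ k) (hbm : b m = q ^ m) :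
    (q - 1) / q < b m / ∑ k ∈ Icc s m, b k := by
  have hq₀ : 0 < q := by linarith
  have hm : m ∈ Icc s m := mem_Icc.2 ⟨hsm, le_rfl⟩
  have hsum_pos : 0 < ∑ k ∈ Icc s m, b k :=
    (hbm ▸ pow_pos hq₀ m).trans_le (single_le_sum hb₀ hm)
  have hsum_lt : ∑ k ∈ Icc s m, b k < q ^ (m + 1) / (q - 1) :=
    (sum_le_sum hbq).trans_lt (geom_sum_Icc_lt hq s m)
  rw [div_lt_div_iff₀ hq₀ hsum_pos, hbm]
  calc (q - 1) * ∑ k ∈ Icc s m, b k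
      < (q - 1) * (q ^ (m + 1) / (q - 1)) := mul_lt_mul_of_pos_left hsum_lt (by linarith)
    _ = q ^ m * q := by rw [mul_div_cancel₀ _ (by linarith), pow_succ]

theorem sub_one_div_exp_lt_div_sum_Icc {B β : ℕ → ℝ} {b : ℝ}
    (hB : ∀ k ≥ 1, B k = exp (k * β k)) (hβ₁ : 0 < β 1) (hmono : MonotoneOn β (Set.Ici 1))
    (hβb : ∀ k ≥ 1, β k ≤ b) {s m : ℕ} (hs : 1 ≤ s) (hsm : s ≤ m) :
    (exp (β 1) - 1) / exp b < B m / ∑ k ∈ Icc s m, B k := by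
  have hm : 1 ≤ m := hs.trans hsm
  have hB_pow : ∀ k ≥ 1, B k = exp (β k) ^ k := fun k hk => by rw [hB k hk, exp_nat_mul]
  have hβ₁m : exp (β 1) ≤ exp (β m) := exp_le_exp.2 (hmono (Set.mem_Ici.2 le_rfl) hm hm)
  have hq : 1 < exp (β m) := (one_lt_exp_iff.2 hβ₁).trans_le hβ₁m
  have hconst : (exp (β 1) - 1) / exp b ≤ (exp (β m) - 1) / exp (β m) :=
    div_le_div₀ (by linarith) (by linarith) (by linarith) (exp_le_exp.2 (hβb m hm))
  refine hconst.trans_lt (sub_one_div_lt_div_sum_Icc hq hsm (fun k hk => ?_) (fun k hk => ?_)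
    (hB_pow m hm))
  all_goals obtain ⟨hsk, hkm⟩ := mem_Icc.1 hk
  · rw [hB k (hs.trans hsk)]
    exact (exp_pos _).le
  · rw [hB_pow k (hs.trans hsk)]
    exact pow_le_pow_left₀ (exp_pos _).le (exp_le_exp.2 (hmono (hs.trans hsk) hm hkm)) k

/-- If β_k = (log B_k)/k is positive and nondecreasing with β_k ↗ β < ∞, then
for all s ≥ 1 and all n, B_{s+n}/(B_s + ⋯ + B_{s+n}) > (e^{β_1}-1)/e^{β} > 0;
in particular condition (Y) fails. -/
theorem stmt4 (B β : ℕ → ℝ) (βlim : ℝ)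
    (hB : ∀ k ≥ 1, B k = Real.exp (k * β k))
    (hβpos : ∀ k ≥ 1, 0 < β k)
    (hβmono : ∀ k ≥ 1, β k ≤ β (k + 1))
    (hβlim : Filter.Tendsto β Filter.atTop (nhds βlim)) :
    (0 < (Real.exp (β 1) - 1) / Real.exp βlim) ∧
    (∀ s ≥ 1, ∀ n : ℕ,
      B (s + n) / ∑ k ∈ Finset.Icc s (s + n), B k
        > (Real.exp (β 1) - 1) / Real.exp βlim) ∧
    ¬ (∀ ε : ℝ, 0 < ε → ∃ N : ℕ, ∀ n ≥ N, ∀ s ≥ 1,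
        B (s + n) / ∑ k ∈ Finset.Icc s (s + n), B k < ε) := by
  have hβ₁ : 0 < β 1 := hβpos 1 le_rfl
  have hmono : MonotoneOn β (Set.Ici 1) := monotoneOn_nat_Ici_of_le_succ hβmono
  have hle_lim : ∀ k ≥ 1, β k ≤ βlim := fun k hk =>
    ge_of_tendsto hβlim (eventually_atTop.2 ⟨k, fun m hm => hmono hk (hk.trans hm) hm⟩)
  have hc : 0 < (exp (β 1) - 1) / exp βlim :=
    div_pos (sub_pos.2 (one_lt_exp_iff.2 hβ₁)) (exp_pos _)
  have hratio : ∀ s ≥ 1, ∀ n : ℕ,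
      B (s + n) / ∑ k ∈ Icc s (s + n), B k > (exp (β 1) - 1) / exp βlim := fun s hs n =>
    sub_one_div_exp_lt_div_sum_Icc hB hβ₁ hmono hle_lim hs (Nat.le_add_right s n)
  refine ⟨hc, hratio, fun hY => ?_⟩
  obtain ⟨N, hN⟩ := hY _ hc
  exact (hN N le_rfl 1 le_rfl).not_gt (hratio 1 le_rfl N)
end

section
/- If β_k := (log B_k)/k is positive, nondecreasing and tends to infinity, then there exists s₀ such that for all s ≥ s₀ and all n ≥ 0, B_{s+n}/(B_s + ⋯ + B_{s+n}) > 1/2. -/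
open Finset Filter Real

/-
Once `β ≥ log 3`, monotonicity of `β` gives `B (k + 1) ≥ exp (β (k + 1)) * B k ≥ 3 * B k`, so from
some point on the sequence grows at least geometrically with ratio 3. A sum of consecutive terms of
such a sequence is at most `3 / 2` times its last term, which is less than twice the last term.
-/

lemma sub_one_mul_sum_Icc_le {B : ℕ → ℝ} {q : ℝ} {s : ℕ} (h0 : 0 ≤ B s)
    (hq : ∀ k ≥ s, q * B k ≤ B (k + 1)) (n : ℕ) :
    (q - 1) * ∑ k ∈ Icc s (s + n), B k ≤ q * B (s + n) := by
  induction n with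
  | zero => simp only [add_zero, Icc_self, sum_singleton]; linarith
  | succ n ih =>
    rw [← add_assoc, sum_Icc_succ_top (by omega), mul_add]
    linarith [hq (s + n) (by omega)]

lemma three_mul_le_of_log_three_le {B β : ℕ → ℝ} {k : ℕ} (hk : B k = exp (k * β k))
    (hk' : B (k + 1) = exp ((k + 1 : ℕ) * β (k + 1))) (hmono : β k ≤ β (k + 1))
    (h3 : log 3 ≤ β (k + 1)) : 3 * B k ≤ B (k + 1) := by
  rw [hk, hk']
  calc 3 * exp (k * β k) ≤ exp (β (k + 1)) * exp (k * β k) := by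
        gcongr
        rwa [← exp_log (by norm_num : (0 : ℝ) < 3), exp_le_exp]
    _ = exp (β (k + 1) + k * β k) := (exp_add _ _).symm
    _ ≤ exp ((k + 1 : ℕ) * β (k + 1)) := by
        gcongr
        push_cast
        nlinarith [(Nat.cast_nonneg k : (0 : ℝ) ≤ k)]

theorem stmt5_general (B β : ℕ → ℝ)
    (hB : ∀ k ≥ 1, B k = Real.exp (k * β k))
    (hβmono : ∀ k ≥ 1, β k ≤ β (k + 1))
    (hβlim : Filter.Tendsto β Filter.atTop Filter.atTop) :
    ∃ s₀ : ℕ, 1 ≤ s₀ ∧ ∀ s ≥ s₀, ∀ n : ℕ,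
      B (s + n) / ∑ k ∈ Finset.Icc s (s + n), B k > 1 / 2 := by
  obtain ⟨N, hN⟩ := eventually_atTop.mp (hβlim.eventually_ge_atTop (log 3))
  refine ⟨N + 1, by omega, fun s hs n => ?_⟩
  have hpos : ∀ k ≥ s, 0 < B k := fun k hk => by rw [hB k (by omega)]; exact exp_pos _
  have hratio : ∀ k ≥ s, 3 * B k ≤ B (k + 1) := fun k hk =>
    three_mul_le_of_log_three_le (hB k (by omega)) (hB (k + 1) (by omega))
      (hβmono k (by omega)) (hN (k + 1) (by omega))
  have hsum := sub_one_mul_sum_Icc_le (hpos s le_rfl).le hratio n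
  have hlast := hpos (s + n) (by omega)
  have hsum_pos : 0 < ∑ k ∈ Icc s (s + n), B k :=
    sum_pos (fun k hk => hpos k (mem_Icc.mp hk).1) ⟨s, by simp⟩
  rw [gt_iff_lt, lt_div_iff₀ hsum_pos]
  linarith

/-- If β_k = (log B_k)/k is positive, nondecreasing and tends to infinity, then
there exists s₀ such that for all s ≥ s₀ and all n ≥ 0,
B_{s+n}/(B_s + ⋯ + B_{s+n}) > 1/2. -/
theorem stmt5 (B β : ℕ → ℝ)
    (hB : ∀ k ≥ 1, B k = Real.exp (k * β k))
    (hβpos : ∀ k ≥ 1, 0 < β k)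
    (hβmono : ∀ k ≥ 1, β k ≤ β (k + 1))
    (hβlim : Filter.Tendsto β Filter.atTop Filter.atTop) :
    ∃ s₀ : ℕ, 1 ≤ s₀ ∧ ∀ s ≥ s₀, ∀ n : ℕ,
      B (s + n) / ∑ k ∈ Finset.Icc s (s + n), B k > 1 / 2 :=
  stmt5_general B β hB hβmono hβlim
end

section
/- If β_k := (log B_k)/k is positive, nonincreasing and tends to 0, then for all large s and all n, B_{s+n}/(B_s + ⋯ + B_{s+n}) ≤ max{4/(n+1), 4·β_{s+n}}; consequently B_{s+n}/(B_s+⋯+B_{s+n}) → 0 as n → ∞ uniformly in s, i.e. condition (Y) holds. -/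
/-!
Put `b = exp (β (s + n))`. Since `β` is nonincreasing, `B k = exp (k β k) ≥ b ^ k` for
`s ≤ k ≤ s + n`, with equality at `k = s + n`, so the ratio is at most
`b ^ n / (1 + b + ⋯ + b ^ n)`. If `(n + 1) β (s + n) ≤ 1`, then `b ^ n ≤ e` and every term of the
sum is `≥ 1`, which gives `e / (n + 1)`. Otherwise `b ^ (n + 1) ≥ e ≥ 2`, and summing the
geometric series gives at most `2 (1 - b⁻¹) ≤ 2 β (s + n)`. Both bounds tend to `0` as `n → ∞`,
uniformly in `s`.
-/

open Finset Filter Real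

lemma exp_sub_one_le_mul_exp (x : ℝ) : exp x - 1 ≤ x * exp x := by
  have h := mul_le_mul_of_nonneg_right (add_one_le_exp (-x)) (exp_pos x).le
  rw [← exp_add, neg_add_cancel, exp_zero] at h
  linarith

lemma exp_pow_div_geom_sum_le_two_mul {x : ℝ} {n : ℕ} (hx : 1 ≤ (n + 1) * x) :
    exp x ^ n / ∑ j ∈ range (n + 1), exp x ^ j ≤ 2 * x := by
  have hx0 : 0 < x := by
    by_contra! h
    nlinarith [(n.cast_nonneg : (0 : ℝ) ≤ n)]
  set b := exp x
  have hb : 1 < b := one_lt_exp_iff.mpr hx0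
  have hbig : 2 ≤ b ^ (n + 1) := by
    rw [← exp_nat_mul]
    calc (2 : ℝ) ≤ 1 + 1 := by norm_num
      _ ≤ exp 1 := add_one_le_exp 1
      _ ≤ exp ((n + 1 : ℕ) * x) := exp_le_exp.mpr (by push_cast; exact hx)
  have hsum : 0 < ∑ j ∈ range (n + 1), b ^ j :=
    sum_pos (fun j _ => pow_pos (exp_pos x) j) nonempty_range_add_one
  rw [div_le_iff₀ hsum]
  refine le_of_mul_le_mul_right ?_ (sub_pos.mpr hb)
  calc b ^ n * (b - 1) ≤ b ^ n * (x * b) :=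
        mul_le_mul_of_nonneg_left (exp_sub_one_le_mul_exp x) (pow_pos (exp_pos x) n).le
    _ = x * b ^ (n + 1) := by ring
    _ ≤ 2 * x * (b ^ (n + 1) - 1) := by nlinarith
    _ = 2 * x * (∑ j ∈ range (n + 1), b ^ j) * (b - 1) := by
        rw [mul_assoc _ _ (b - 1), geom_sum_mul]

lemma exp_pow_div_geom_sum_le_exp_one_div {x : ℝ} {n : ℕ} (hx : 0 ≤ x) (hnx : n * x ≤ 1) :
    exp x ^ n / ∑ j ∈ range (n + 1), exp x ^ j ≤ exp 1 / (n + 1) := by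
  have hsum : (n + 1 : ℝ) ≤ ∑ j ∈ range (n + 1), exp x ^ j := by
    simpa using card_nsmul_le_sum (range (n + 1)) _ 1
      fun j _ => one_le_pow₀ (one_le_exp hx)
  rw [← exp_nat_mul]
  exact div_le_div₀ (exp_pos 1).le (exp_le_exp.mpr hnx) (by positivity) hsum

lemma exp_pow_div_geom_sum_le {x : ℝ} (hx : 0 < x) (n : ℕ) :
    exp x ^ n / ∑ j ∈ range (n + 1), exp x ^ j ≤ max (4 / ((n : ℝ) + 1)) (4 * x) := by
  rcases le_total 1 ((n + 1) * x) with h | h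
  · exact le_max_of_le_right ((exp_pow_div_geom_sum_le_two_mul h).trans (by linarith))
  · refine le_max_of_le_left ((exp_pow_div_geom_sum_le_exp_one_div hx.le (by linarith)).trans ?_)
    gcongr
    linarith [exp_one_lt_d9]

lemma sum_Icc_pow_eq {M : Type*} [Semiring M] (b : M) (s n : ℕ) :
    ∑ k ∈ Icc s (s + n), b ^ k = b ^ s * ∑ j ∈ range (n + 1), b ^ j := by
  rw [← Ico_add_one_right_eq_Icc, sum_Ico_eq_sum_range, mul_sum]
  simp only [pow_add]
  congr 2
  omega

lemma div_sum_Icc_le_exp_pow_div_geom_sum {B β : ℕ → ℝ}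
    (hB : ∀ k ≥ 1, B k = exp (k * β k)) (hβ : AntitoneOn β {k | 1 ≤ k})
    {s : ℕ} (hs : 1 ≤ s) (n : ℕ) :
    B (s + n) / ∑ k ∈ Icc s (s + n), B k
      ≤ exp (β (s + n)) ^ n / ∑ j ∈ range (n + 1), exp (β (s + n)) ^ j := by
  set b := exp (β (s + n))
  have hB_top : B (s + n) = b ^ (s + n) := by rw [hB _ (by omega), ← exp_nat_mul]
  have hB_ge : ∀ k ∈ Icc s (s + n), b ^ k ≤ B k := by
    intro k hk
    obtain ⟨hsk, hkn⟩ := mem_Icc.mp hk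
    rw [hB _ (by omega), ← exp_nat_mul]
    exact exp_le_exp.mpr <| mul_le_mul_of_nonneg_left
      (hβ (show 1 ≤ k by omega) (show 1 ≤ s + n by omega) hkn) k.cast_nonneg
  calc B (s + n) / ∑ k ∈ Icc s (s + n), B k
      ≤ b ^ (s + n) / ∑ k ∈ Icc s (s + n), b ^ k := by
        rw [hB_top]
        exact div_le_div_of_nonneg_left (by positivity)
          (by rw [sum_Icc_pow_eq]; positivity) (sum_le_sum hB_ge)
    _ = b ^ n / ∑ j ∈ range (n + 1), b ^ j := by
        rw [sum_Icc_pow_eq, pow_add, mul_div_mul_left _ _ (pow_pos (exp_pos _) s).ne']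

/-- If β_k = (log B_k)/k is positive, nonincreasing and tends to 0, then for all
large s and all n, B_{s+n}/(B_s + ⋯ + B_{s+n}) ≤ max{4/(n+1), 4·β_{s+n}};
consequently the ratio tends to 0 as n → ∞ uniformly in s, i.e. (Y) holds. -/
theorem stmt6 (B β : ℕ → ℝ)
    (hB : ∀ k ≥ 1, B k = Real.exp (k * β k))
    (hβpos : ∀ k ≥ 1, 0 < β k)
    (hβmono : ∀ k ≥ 1, β (k + 1) ≤ β k)
    (hβlim : Filter.Tendsto β Filter.atTop (nhds 0)) :
    ∃ s₀ : ℕ, 1 ≤ s₀ ∧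
      (∀ s ≥ s₀, ∀ n : ℕ,
        B (s + n) / ∑ k ∈ Finset.Icc s (s + n), B k
          ≤ max (4 / ((n : ℝ) + 1)) (4 * β (s + n))) ∧
      (∀ ε : ℝ, 0 < ε → ∃ N : ℕ, ∀ n ≥ N, ∀ s ≥ s₀,
        B (s + n) / ∑ k ∈ Finset.Icc s (s + n), B k < ε) := by
  have hbound : ∀ s ≥ 1, ∀ n : ℕ, B (s + n) / ∑ k ∈ Icc s (s + n), B k
      ≤ max (4 / ((n : ℝ) + 1)) (4 * β (s + n)) := fun s hs n =>
    (div_sum_Icc_le_exp_pow_div_geom_sum hB (antitoneOn_nat_Ici_of_succ_le hβmono) hs n).trans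
      (exp_pow_div_geom_sum_le (hβpos _ (by omega)) n)
  refine ⟨1, le_rfl, hbound, fun ε hε => ?_⟩
  have hdiv : ∀ᶠ n : ℕ in atTop, 4 / ((n : ℝ) + 1) < ε := by
    have h := (tendsto_one_div_add_atTop_nhds_zero_nat (𝕜 := ℝ)).const_mul 4
    simp only [mul_zero, mul_one_div] at h
    exact h.eventually_lt_const hε
  have hβsmall : ∀ᶠ k in atTop, 4 * β k < ε := by
    have h := hβlim.const_mul 4
    rw [mul_zero] at h
    exact h.eventually_lt_const hε
  obtain ⟨N, hN⟩ := eventually_atTop.mp (hdiv.and hβsmall)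
  exact ⟨N, fun n hn s hs =>
    (hbound s hs n).trans_lt (max_lt (hN n hn).1 (hN (s + n) (by omega)).2)⟩
end

section
/- For b = exp(β) with 0 < β < 1 and any n ≥ 1: if b^n < 2 then b^{n+1} - 1 > (n+1)β, and since e^β - 1 < 2β, it follows that b^n(b-1)/(b^{n+1}-1) ≤ 4/(n+1); if b^n ≥ 2 then b^n < 2(b^{n+1}-1) and b^n(b-1)/(b^{n+1}-1) ≤ 4β. -/
open Real

/-
Two regimes. While `b ^ n < 2`, the numerator `b ^ n * (b - 1)` is below `2 * 2 * β` and the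
denominator `e ^ ((n + 1) * β) - 1` exceeds `(n + 1) * β`. Once `b ^ n ≥ 2`, the `-1` in the
denominator costs at most a factor `2`, so the ratio is at most `2 * (b - 1) < 4 * β`.
-/

namespace Real

-- From the second-order bound `exp x ≤ 1 + x + 3 x² / 4` on `[0, 1]`.
theorem exp_sub_one_lt_two_mul {x : ℝ} (hx0 : 0 < x) (hx1 : x ≤ 1) : exp x - 1 < 2 * x := by
  have h := exp_bound' hx0.le hx1 (n := 2) two_pos
  simp only [Finset.sum_range_succ, Finset.sum_range_zero, Nat.factorial, Nat.cast_ofNat] at h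
  nlinarith

theorem mul_lt_exp_pow_sub_one {x : ℝ} (hx : 0 < x) {m : ℕ} (hm : m ≠ 0) :
    m * x < exp x ^ m - 1 := by
  have := add_one_lt_exp (by positivity : (m : ℝ) * x ≠ 0)
  rw [← exp_nat_mul]
  linarith

end Real

section GeometricRatio

variable {b : ℝ} {n : ℕ}

theorem pow_lt_two_mul_pow_succ_sub_one (hb : 1 < b) (h2 : 2 ≤ b ^ n) :
    b ^ n < 2 * (b ^ (n + 1) - 1) := by
  have : b ^ n < b ^ (n + 1) := pow_lt_pow_right₀ hb n.lt_succ_self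
  linarith

theorem pow_mul_sub_one_div_pow_succ_sub_one_le (hb : 1 < b) (h2 : 2 ≤ b ^ n) :
    b ^ n * (b - 1) / (b ^ (n + 1) - 1) ≤ 2 * (b - 1) := by
  have hlt := pow_lt_two_mul_pow_succ_sub_one hb h2
  rw [div_le_iff₀ (by linarith)]
  nlinarith

end GeometricRatio

theorem stmt7_general (β : ℝ) (hβ0 : 0 < β) (hβ1 : β < 1) (b : ℝ) (hb : b = Real.exp β)
    (n : ℕ) :
    b - 1 < 2 * β ∧
    (b ^ n < 2 →
      b ^ (n + 1) - 1 > (n + 1) * β ∧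
      b ^ n * (b - 1) / (b ^ (n + 1) - 1) ≤ 4 / (n + 1)) ∧
    (2 ≤ b ^ n →
      b ^ n < 2 * (b ^ (n + 1) - 1) ∧
      b ^ n * (b - 1) / (b ^ (n + 1) - 1) ≤ 4 * β) := by
  subst hb
  have hb1 : 1 < exp β := one_lt_exp_iff.mpr hβ0
  have hnum : exp β - 1 < 2 * β := exp_sub_one_lt_two_mul hβ0 hβ1.le
  have hden : (n + 1) * β < exp β ^ (n + 1) - 1 := by
    exact_mod_cast mul_lt_exp_pow_sub_one hβ0 n.succ_ne_zero
  refine ⟨hnum, fun h2 => ⟨hden, ?_⟩, fun h2 => ⟨pow_lt_two_mul_pow_succ_sub_one hb1 h2, ?_⟩⟩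
  · calc exp β ^ n * (exp β - 1) / (exp β ^ (n + 1) - 1)
        ≤ 4 * β / ((n + 1) * β) := by
          gcongr ?_ / ?_
          nlinarith [pow_pos (exp_pos β) n]
      _ = 4 / (n + 1) := mul_div_mul_right _ _ hβ0.ne'
  · linarith [pow_mul_sub_one_div_pow_succ_sub_one_le hb1 h2]

/-- For b = e^β with 0 < β < 1 and n ≥ 1: e^β - 1 < 2β; if b^n < 2 then
b^{n+1} - 1 > (n+1)β and b^n(b-1)/(b^{n+1}-1) ≤ 4/(n+1); if b^n ≥ 2 then
b^n < 2(b^{n+1}-1) and b^n(b-1)/(b^{n+1}-1) ≤ 4β. -/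
theorem stmt7 (β : ℝ) (hβ0 : 0 < β) (hβ1 : β < 1) (b : ℝ) (hb : b = Real.exp β)
    (n : ℕ) (hn : 1 ≤ n) :
    b - 1 < 2 * β ∧
    (b ^ n < 2 →
      b ^ (n + 1) - 1 > (n + 1) * β ∧
      b ^ n * (b - 1) / (b ^ (n + 1) - 1) ≤ 4 / (n + 1)) ∧
    (2 ≤ b ^ n →
      b ^ n < 2 * (b ^ (n + 1) - 1) ∧
      b ^ n * (b - 1) / (b ^ (n + 1) - 1) ≤ 4 * β) :=
  stmt7_general β hβ0 hβ1 b hb n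
end

section
/- With δ_k = (5!/(k+5)!)²·ε_1·ε_2⋯ε_j for k_j ≤ k < k_{j+1}, define B_k = 2^{-k-1}·log(1/δ_k) and A_j = log(1/(ε_1⋯ε_j)). If k_{j+1}²/A_j → 0 as j → ∞, then B_k = 2^{-k}·log((k+5)!/5!) + 2^{-k-1}·A_j for k_j ≤ k < k_{j+1}, and for all large j one has B_{k_j} + B_{k_j+1} + ⋯ + B_{k_{j+1}-1} < 3·B_{k_j}. -/
open Finset Filter Real
open scoped Nat Topology

/-!
Since `ε j → 0`, the products `ε₁⋯ε_j` decay at least geometrically, so `A_j → ∞`. On a block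
`k_j ≤ k < k_{j+1}` the factorial part of `B_k` is at most `(k+5)² / 2^k`, which the hypothesis
`k_{j+1}² = o(A_j)` makes negligible against `A_j / 2^k`; the block sum is then essentially the
geometric series `∑ A_j / 2^{k+1} < 2 · A_j / 2^{k_j + 1}`, leaving room for the factor `3`.
-/

theorem tendsto_prod_Icc_one_nhds_zero {R : Type*} [NormedCommRing R] [CompleteSpace R]
    {ε : ℕ → R} (hε : Tendsto ε atTop (𝓝 0)) :
    Tendsto (fun j => ∏ i ∈ Icc 1 j, ε i) atTop (𝓝 0) := by
  have hsmall : ∀ᶠ n in atTop, ‖ε (n + 1)‖ ≤ 1 / 2 :=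
    (tendsto_add_atTop_iff_nat 1).2 (tendsto_norm_zero.comp hε)
      |>.eventually_le_const (by norm_num)
  refine Summable.tendsto_atTop_zero (summable_of_ratio_norm_eventually_le (r := 1 / 2)
    (by norm_num) ?_)
  filter_upwards [hsmall] with n hn
  rw [prod_Icc_succ_top (by omega), mul_comm (1 / 2 : ℝ)]
  exact (norm_mul_le _ _).trans (mul_le_mul_of_nonneg_left hn (norm_nonneg _))

theorem tendsto_log_one_div_prod_Icc_one_atTop {ε : ℕ → ℝ} (hpos : ∀ i ≥ 1, 0 < ε i)
    (hε : Tendsto ε atTop (𝓝 0)) :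
    Tendsto (fun j => log (1 / ∏ i ∈ Icc 1 j, ε i)) atTop atTop := by
  have hprod : Tendsto (fun j => ∏ i ∈ Icc 1 j, ε i) atTop (𝓝[>] 0) :=
    tendsto_nhdsWithin_iff.2 ⟨tendsto_prod_Icc_one_nhds_zero hε, Eventually.of_forall
      fun j => prod_pos fun i hi => hpos i (mem_Icc.1 hi).1⟩
  simpa only [one_div, log_inv, Function.comp_def] using
    tendsto_neg_atBot_atTop.comp (tendsto_log_nhdsGT_zero.comp hprod)

theorem log_one_div_sq_mul_div_two_pow {c F P : ℝ} (hc : 0 < c) (hF : 0 < F) (hP : 0 < P)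
    (k : ℕ) :
    log (1 / ((c / F) ^ 2 * P)) / 2 ^ (k + 1) = log (F / c) / 2 ^ k + log (1 / P) / 2 ^ (k + 1) := by
  have hsplit : 1 / ((c / F) ^ 2 * P) = (F / c) ^ 2 * (1 / P) := by field_simp
  rw [hsplit, log_mul (by positivity) (by positivity), log_pow, pow_succ]
  ring

theorem log_factorial_le_sq (n : ℕ) : log (n ! : ℝ) ≤ (n : ℝ) ^ 2 :=
  calc log (n ! : ℝ) ≤ log ((n : ℝ) ^ n) :=
        log_le_log (by positivity) (by exact_mod_cast Nat.factorial_le_pow n)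
    _ = n * log n := log_pow n _
    _ ≤ (n : ℝ) ^ 2 := by
        rw [sq]; exact mul_le_mul_of_nonneg_left (log_le_self n.cast_nonneg) n.cast_nonneg

theorem log_factorial_add_five_div_nonneg (k : ℕ) : 0 ≤ log (((k + 5)! : ℝ) / 120) := by
  refine log_nonneg ((one_le_div (by norm_num)).2 ?_)
  exact_mod_cast Nat.factorial_le (by omega : 5 ≤ k + 5)

theorem log_factorial_add_five_div_le {k n : ℕ} (hkn : k < n) :
    log (((k + 5)! : ℝ) / 120) ≤ 25 * (n : ℝ) ^ 2 := by
  have hkn' : (k : ℝ) + 5 ≤ 5 * n := by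
    have : (k : ℝ) + 1 ≤ n := by exact_mod_cast hkn
    linarith
  calc log (((k + 5)! : ℝ) / 120) = log ((k + 5)! : ℝ) - log 120 :=
        log_div (by positivity) (by norm_num)
    _ ≤ log ((k + 5)! : ℝ) := by linarith [log_nonneg (by norm_num : (1 : ℝ) ≤ 120)]
    _ ≤ ((k : ℝ) + 5) ^ 2 := by exact_mod_cast log_factorial_le_sq (k + 5)
    _ ≤ (5 * n : ℝ) ^ 2 := pow_le_pow_left₀ (by positivity) hkn' 2
    _ = 25 * (n : ℝ) ^ 2 := by ring

theorem sum_Ico_inv_two_pow_lt (m n : ℕ) :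
    ∑ k ∈ Ico m n, ((2 : ℝ) ^ k)⁻¹ < 2 * ((2 : ℝ) ^ m)⁻¹ := by
  rcases le_total m n with hmn | hnm
  · simp only [← inv_pow]
    rw [geom_sum_Ico (by norm_num) hmn, show (2 : ℝ)⁻¹ - 1 = -2⁻¹ by norm_num, div_neg,
      div_inv_eq_mul]
    have : (0 : ℝ) < 2⁻¹ ^ n := by positivity
    linarith
  · rw [Ico_eq_empty_of_le hnm, sum_empty]
    positivity

theorem sum_Ico_div_two_pow_lt_three_mul_first {L : ℕ → ℝ} {A : ℝ} {m n : ℕ} (hA : 0 < A) (hLm : 0 ≤ L m)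
    (hL : ∀ k ∈ Ico m n, L k ≤ A / 4) :
    ∑ k ∈ Ico m n, (L k / 2 ^ k + A / 2 ^ (k + 1)) < 3 * (L m / 2 ^ m + A / 2 ^ (m + 1)) :=
  calc ∑ k ∈ Ico m n, (L k / 2 ^ k + A / 2 ^ (k + 1))
      ≤ ∑ k ∈ Ico m n, (3 * A / 4) * ((2 : ℝ) ^ k)⁻¹ := by
        refine sum_le_sum fun k hk => ?_
        rw [pow_succ, div_eq_mul_inv, div_eq_mul_inv, mul_inv]
        nlinarith [hL k hk, inv_pos.2 (pow_pos (two_pos : (0 : ℝ) < 2) k)]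
    _ < (3 * A / 4) * (2 * ((2 : ℝ) ^ m)⁻¹) := by
        rw [← mul_sum]; exact mul_lt_mul_of_pos_left (sum_Ico_inv_two_pow_lt m n) (by positivity)
    _ ≤ 3 * (L m / 2 ^ m + A / 2 ^ (m + 1)) := by
        rw [pow_succ]
        have : 0 ≤ L m / 2 ^ m := by positivity
        field_simp
        nlinarith

theorem stmt9_general (kj : ℕ → ℕ) (ε δ Bseq A : ℕ → ℝ)
    (hkjgap : Filter.Tendsto (fun j => kj (j + 1) - kj j) Filter.atTop Filter.atTop)
    (hεpos : ∀ j ≥ 1, 0 < ε j)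
    (hεlim : Filter.Tendsto ε Filter.atTop (nhds 0))
    (hδ : ∀ j ≥ 1, ∀ k, kj j ≤ k → k < kj (j + 1) →
      δ k = ((120 : ℝ) / (Nat.factorial (k + 5))) ^ 2 * ∏ i ∈ Finset.Icc 1 j, ε i)
    (hB : ∀ k, Bseq k = Real.log (1 / δ k) / 2 ^ (k + 1))
    (hA : ∀ j, A j = Real.log (1 / ∏ i ∈ Finset.Icc 1 j, ε i))
    (hcond : Filter.Tendsto (fun j => (kj (j + 1) : ℝ) ^ 2 / A j)
      Filter.atTop (nhds 0)) :
    (∀ j ≥ 1, ∀ k, kj j ≤ k → k < kj (j + 1) →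
      Bseq k = Real.log ((Nat.factorial (k + 5) : ℝ) / 120) / 2 ^ k
        + A j / 2 ^ (k + 1)) ∧
    (∃ J, ∀ j ≥ J, ∑ k ∈ Finset.Ico (kj j) (kj (j + 1)), Bseq k
      < 3 * Bseq (kj j)) := by
  have hBformula : ∀ j ≥ 1, ∀ k, kj j ≤ k → k < kj (j + 1) →
      Bseq k = log (((k + 5)! : ℝ) / 120) / 2 ^ k + A j / 2 ^ (k + 1) := by
    intro j hj k hk hk'
    rw [hB, hδ j hj k hk hk', hA]
    exact log_one_div_sq_mul_div_two_pow (by norm_num) (by positivity)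
      (prod_pos fun i hi => hεpos i (mem_Icc.1 hi).1) k
  refine ⟨hBformula, ?_⟩
  have hAtop : Tendsto A atTop atTop :=
    (tendsto_congr hA).2 (tendsto_log_one_div_prod_Icc_one_atTop hεpos hεlim)
  obtain ⟨J, hJ⟩ := eventually_atTop.1 <| (hAtop.eventually_gt_atTop 0).and <|
    (hcond.eventually_lt_const (by norm_num : (0 : ℝ) < 1 / 100)).and <|
    (hkjgap.eventually_gt_atTop 0).and (eventually_ge_atTop 1)
  refine ⟨J, fun j hj => ?_⟩
  obtain ⟨hApos, hratio, hgap, hj1⟩ := hJ j hj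
  have hsq : 25 * (kj (j + 1) : ℝ) ^ 2 ≤ A j / 4 := by
    rw [div_lt_iff₀ hApos] at hratio; linarith
  rw [sum_congr rfl fun k hk => hBformula j hj1 k (mem_Ico.1 hk).1 (mem_Ico.1 hk).2,
    hBformula j hj1 _ le_rfl (by omega)]
  exact sum_Ico_div_two_pow_lt_three_mul_first (L := fun k => log (((k + 5)! : ℝ) / 120)) hApos
    (log_factorial_add_five_div_nonneg _)
    fun k hk => (log_factorial_add_five_div_le (mem_Ico.1 hk).2).trans hsq

/-- With δ_k = (5!/(k+5)!)²·ε_1⋯ε_j for k_j ≤ k < k_{j+1}, B_k = 2^{-k-1}log(1/δ_k)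
and A_j = log(1/(ε_1⋯ε_j)): if k_{j+1}²/A_j → 0 then
B_k = 2^{-k}·log((k+5)!/5!) + 2^{-k-1}·A_j on k_j ≤ k < k_{j+1}, and for all large j,
B_{k_j} + ⋯ + B_{k_{j+1}-1} < 3·B_{k_j}. -/
theorem stmt9 (kj : ℕ → ℕ) (ε δ Bseq A : ℕ → ℝ)
    (hkjmono : ∀ j ≥ 1, kj (j + 1) - kj j < kj (j + 2) - kj (j + 1))
    (hkjgap : Filter.Tendsto (fun j => kj (j + 1) - kj j) Filter.atTop Filter.atTop)
    (hεpos : ∀ j ≥ 1, 0 < ε j)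
    (hεdec : ∀ j ≥ 1, ε (j + 1) < ε j)
    (hεlim : Filter.Tendsto ε Filter.atTop (nhds 0))
    (hδ : ∀ j ≥ 1, ∀ k, kj j ≤ k → k < kj (j + 1) →
      δ k = ((120 : ℝ) / (Nat.factorial (k + 5))) ^ 2 * ∏ i ∈ Finset.Icc 1 j, ε i)
    (hB : ∀ k, Bseq k = Real.log (1 / δ k) / 2 ^ (k + 1))
    (hA : ∀ j, A j = Real.log (1 / ∏ i ∈ Finset.Icc 1 j, ε i))
    (hcond : Filter.Tendsto (fun j => (kj (j + 1) : ℝ) ^ 2 / A j)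
      Filter.atTop (nhds 0)) :
    (∀ j ≥ 1, ∀ k, kj j ≤ k → k < kj (j + 1) →
      Bseq k = Real.log ((Nat.factorial (k + 5) : ℝ) / 120) / 2 ^ k
        + A j / 2 ^ (k + 1)) ∧
    (∃ J, ∀ j ≥ J, ∑ k ∈ Finset.Ico (kj j) (kj (j + 1)), Bseq k
      < 3 * Bseq (kj j)) :=
  stmt9_general kj ε δ Bseq A hkjgap hεpos hεlim hδ hB hA hcond
end

section
/- Let α(t) = 1 - ε(t) with ε(t) ↘ 0 and ε(t)·log log(1/t) ↗ ∞ as t ↘ 0, and h(t) = (log(1/t))^{-α(t)}. Then the inverse function satisfies h^{-1}(τ) = exp(-(1/τ)^{1+δ(τ)}) where δ(τ) ↘ 0 as τ ↘ 0, and consequently (log(1/h^{-1}(2^{-k})))^{1/k} → 2 as k → ∞. -/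
open Real Set Filter Topology

/-!
Inverting `τ = (log (1/t))^{-α}` gives `log (1/t) = (1/τ)^{1/α}`, so `h⁻¹` has the stated form
with `1 + δ(τ) = 1/(1 - ε(h⁻¹ τ))`. Since `δ ≥ 0`, `h⁻¹ τ ≤ exp (-1/τ) → 0`, hence `ε(h⁻¹ τ) → 0`
and `δ → 0`. At `τ = 2^{-k}` one gets `log (1/h⁻¹ τ) = 2^{k(1+δ)}`, whose `k`-th root `2^{1+δ}`
tends to `2`.
-/

lemma eq_exp_neg_rpow_of_eq_exp_neg_mul_log_log {t α τ : ℝ} (ht : 0 < t) (ht1 : t < 1)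
    (hα : α ≠ 0) (hτ : τ = exp (-α * log (log (1 / t)))) :
    t = exp (-((1 / τ) ^ α⁻¹)) := by
  have hlog : 0 < log (1 / t) := log_pos (by rw [one_div]; exact one_lt_inv₀ ht |>.mpr ht1)
  have hτinv : 1 / τ = exp (α * log (log (1 / t))) := by
    rw [hτ, one_div, ← exp_neg, neg_mul, neg_neg]
  rw [hτinv, ← exp_mul, mul_comm α, mul_assoc, mul_inv_cancel₀ hα, mul_one, exp_log hlog,
    one_div, log_inv, neg_neg, exp_log ht]

lemma tendsto_nhdsGT_zero_of_eq_exp_neg_rpow {g δ : ℝ → ℝ} (hδ : ∀ᶠ τ in 𝓝[>] 0, 0 ≤ δ τ)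
    (hg : ∀ᶠ τ in 𝓝[>] 0, g τ = exp (-((1 / τ) ^ (1 + δ τ)))) :
    Tendsto g (𝓝[>] 0) (𝓝[>] 0) := by
  have hbound : Tendsto (fun τ : ℝ => exp (-(1 / τ))) (𝓝[>] 0) (𝓝 0) := by
    simpa only [one_div, Function.comp_def] using
      tendsto_exp_atBot.comp (tendsto_neg_atTop_atBot.comp (tendsto_inv_nhdsGT_zero (𝕜 := ℝ)))
  have hle_one : ∀ᶠ τ in 𝓝[>] (0 : ℝ), τ ≤ 1 :=
    eventually_nhdsWithin_of_eventually_nhds (eventually_le_nhds one_pos)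
  refine tendsto_nhdsWithin_of_tendsto_nhds_of_eventually_within _
    (tendsto_of_tendsto_of_tendsto_of_le_of_le' tendsto_const_nhds hbound ?_ ?_) ?_
  · filter_upwards [hg] with τ hτ
    exact hτ ▸ (exp_pos _).le
  · filter_upwards [hg, hδ, hle_one, self_mem_nhdsWithin] with τ hτ hδτ hτ1 (hτ0 : 0 < τ)
    rw [hτ, exp_le_exp, neg_le_neg_iff]
    exact self_le_rpow_of_one_le (one_le_one_div hτ0 hτ1) (le_add_of_nonneg_right hδτ)
  · filter_upwards [hg] with τ hτ
    exact hτ ▸ exp_pos _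

lemma tendsto_rpow_neg_natCast_nhdsGT_zero {b : ℝ} (hb : 1 < b) :
    Tendsto (fun k : ℕ => b ^ (-(k : ℝ))) atTop (𝓝[>] 0) := by
  have hb0 : 0 < b := one_pos.trans hb
  have hpow : (fun k : ℕ => b ^ (-(k : ℝ))) = fun k => b⁻¹ ^ k := by
    ext k
    rw [rpow_neg hb0.le, rpow_natCast, inv_pow]
  rw [hpow]
  exact tendsto_nhdsWithin_of_tendsto_nhds_of_eventually_within _
    (tendsto_pow_atTop_nhds_zero_of_lt_one (inv_nonneg.mpr hb0.le) (inv_lt_one_of_one_lt₀ hb))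
    (Eventually.of_forall fun k => pow_pos (inv_pos.mpr hb0) k)

lemma tendsto_log_one_div_rpow_inv_of_eq_exp_neg_rpow {g δ : ℝ → ℝ} {b : ℝ} (hb : 1 < b)
    (hδ : Tendsto δ (𝓝[>] 0) (𝓝 0))
    (hg : ∀ᶠ τ in 𝓝[>] 0, g τ = exp (-((1 / τ) ^ (1 + δ τ)))) :
    Tendsto (fun k : ℕ => (log (1 / g (b ^ (-(k : ℝ))))) ^ (k : ℝ)⁻¹) atTop (𝓝 b) := by
  have hb0 : 0 < b := one_pos.trans hb
  have hs := tendsto_rpow_neg_natCast_nhdsGT_zero hb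
  have hlim : Tendsto (fun k : ℕ => b ^ (1 + δ (b ^ (-(k : ℝ))))) atTop (𝓝 b) := by
    have := tendsto_const_nhds.rpow ((hδ.comp hs).const_add 1) (Or.inl hb0.ne')
    simpa only [add_zero, rpow_one, Function.comp_def] using this
  refine hlim.congr' ?_
  filter_upwards [hs.eventually hg, eventually_ne_atTop 0] with k hk hk0
  have hk0' : (k : ℝ) ≠ 0 := Nat.cast_ne_zero.mpr hk0
  rw [hk, one_div, ← exp_neg, log_exp, neg_neg, rpow_neg hb0.le, one_div, inv_inv,
    ← rpow_mul hb0.le, ← rpow_mul hb0.le, mul_comm, ← mul_assoc, inv_mul_cancel₀ hk0', one_mul]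

theorem stmt13_general (t₀ : ℝ) (ht₀1 : t₀ < 1)
    (ε h : ℝ → ℝ)
    (hεpos : ∀ t ∈ Set.Ioo (0 : ℝ) t₀, 0 < ε t ∧ ε t < 1)
    (hεlim : Filter.Tendsto ε (nhdsWithin 0 (Set.Ioi 0)) (nhds 0))
    (hh : ∀ t ∈ Set.Ioo (0 : ℝ) t₀,
      h t = Real.exp (-(1 - ε t) * Real.log (Real.log (1 / t))))
    (g : ℝ → ℝ) (τ₀ : ℝ) (hτ₀ : 0 < τ₀)
    (hg : ∀ τ ∈ Set.Ioc (0 : ℝ) τ₀, g τ ∈ Set.Ioo (0 : ℝ) t₀ ∧ h (g τ) = τ) :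
    (∃ δfun : ℝ → ℝ,
      Filter.Tendsto δfun (nhdsWithin 0 (Set.Ioi 0)) (nhds 0) ∧
      ∀ᶠ τ in nhdsWithin (0 : ℝ) (Set.Ioi 0),
        g τ = Real.exp (-((1 / τ) ^ (1 + δfun τ)))) ∧
    Filter.Tendsto
      (fun k : ℕ => (Real.log (1 / g ((2 : ℝ) ^ (-(k : ℝ))))) ^ ((k : ℝ))⁻¹)
      Filter.atTop (nhds 2) := by
  set δ : ℝ → ℝ := fun τ => (1 - ε (g τ))⁻¹ - 1
  have hsmall : ∀ᶠ τ in 𝓝[>] (0 : ℝ), τ ∈ Ioc 0 τ₀ := Ioc_mem_nhdsGT hτ₀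
  have hδ_nonneg : ∀ᶠ τ in 𝓝[>] (0 : ℝ), 0 ≤ δ τ := by
    filter_upwards [hsmall] with τ hτ
    obtain ⟨hε0, hε1⟩ := hεpos _ (hg τ hτ).1
    exact sub_nonneg.mpr (one_le_inv₀ (by linarith) |>.mpr (by linarith))
  have hformula : ∀ᶠ τ in 𝓝[>] (0 : ℝ), g τ = exp (-((1 / τ) ^ (1 + δ τ))) := by
    filter_upwards [hsmall] with τ hτ
    obtain ⟨hgτ, hhgτ⟩ := hg τ hτ
    obtain ⟨hε0, hε1⟩ := hεpos _ hgτ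
    rw [add_sub_cancel]
    exact eq_exp_neg_rpow_of_eq_exp_neg_mul_log_log hgτ.1 (hgτ.2.trans ht₀1)
      (by linarith) (hhgτ.symm.trans (hh _ hgτ))
  have hεg : Tendsto (fun τ => ε (g τ)) (𝓝[>] 0) (𝓝 0) :=
    hεlim.comp (tendsto_nhdsGT_zero_of_eq_exp_neg_rpow hδ_nonneg hformula)
  have hδ : Tendsto δ (𝓝[>] 0) (𝓝 0) := by
    simpa using ((tendsto_const_nhds (x := (1 : ℝ))).sub hεg).inv₀ (by norm_num) |>.sub_const 1
  exact ⟨⟨δ, hδ, hformula⟩,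
    tendsto_log_one_div_rpow_inv_of_eq_exp_neg_rpow one_lt_two hδ hformula⟩

/-- For α(t) = 1 - ε(t) with ε ↘ 0 and ε(t)·log log(1/t) ↗ ∞ as t ↘ 0, and
h(t) = (log(1/t))^{-α(t)}: the inverse of h satisfies
h⁻¹(τ) = exp(-(1/τ)^{1+δ(τ)}) with δ(τ) → 0 as τ ↘ 0, and consequently
(log(1/h⁻¹(2^{-k})))^{1/k} → 2 as k → ∞. -/
theorem stmt13 (t₀ : ℝ) (ht₀ : 0 < t₀) (ht₀1 : t₀ < 1)
    (ε h : ℝ → ℝ)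
    (hεpos : ∀ t ∈ Set.Ioo (0 : ℝ) t₀, 0 < ε t ∧ ε t < 1)
    (hεmono : MonotoneOn ε (Set.Ioo 0 t₀))
    (hεlim : Filter.Tendsto ε (nhdsWithin 0 (Set.Ioi 0)) (nhds 0))
    (hεlog_mono : AntitoneOn (fun t => ε t * Real.log (Real.log (1 / t))) (Set.Ioo 0 t₀))
    (hεlog : Filter.Tendsto (fun t => ε t * Real.log (Real.log (1 / t)))
      (nhdsWithin 0 (Set.Ioi 0)) Filter.atTop)
    (hh : ∀ t ∈ Set.Ioo (0 : ℝ) t₀,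
      h t = Real.exp (-(1 - ε t) * Real.log (Real.log (1 / t))))
    (hhmono : StrictMonoOn h (Set.Ioo 0 t₀))
    (g : ℝ → ℝ) (τ₀ : ℝ) (hτ₀ : 0 < τ₀)
    (hg : ∀ τ ∈ Set.Ioc (0 : ℝ) τ₀, g τ ∈ Set.Ioo (0 : ℝ) t₀ ∧ h (g τ) = τ) :
    (∃ δfun : ℝ → ℝ,
      Filter.Tendsto δfun (nhdsWithin 0 (Set.Ioi 0)) (nhds 0) ∧
      ∀ᶠ τ in nhdsWithin (0 : ℝ) (Set.Ioi 0),
        g τ = Real.exp (-((1 / τ) ^ (1 + δfun τ)))) ∧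
    Filter.Tendsto
      (fun k : ℕ => (Real.log (1 / g ((2 : ℝ) ^ (-(k : ℝ))))) ^ ((k : ℝ))⁻¹)
      Filter.atTop (nhds 2) :=
  stmt13_general t₀ ht₀1 ε h hεpos hεlim hh g τ₀ hτ₀ hg
end

section
/- Let α(t) = α_0 + ε(t) with 0 < α_0 < 1, ε(t) ↘ 0, ε(t)·log log(1/t) ↗ ∞, and h = h_0^α. Then h^{-1}(τ) = exp(-(1/τ)^{1/α_0 - δ(τ)}) with δ(τ) ↘ 0, and (log(1/h^{-1}(2^{-k})))^{1/k} → 2^{1/α_0} ≠ 2 as k → ∞. -/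
open Real Set Filter
open scoped Topology

/-!
Solving `h(t) = τ` explicitly gives `log (1 / h⁻¹(τ)) = (1/τ)^(1/α(h⁻¹ τ))`, so
`δ(τ) = 1/α₀ - 1/α(h⁻¹ τ)`. Since `α < 1`, this forces `h⁻¹(τ) < τ`, hence `h⁻¹(τ) → 0` and
`δ(τ) → 0`. At `τ = 2^{-k}` the `k`-th root of `(2^k)^{1/α}` is exactly `2^{1/α}`, which tends to
`2^{1/α₀} > 2`.
-/

theorem log_one_div_eq_rpow_of_exp_eq {A t τ : ℝ} (hA : 0 < A) (ht : t ∈ Ioo 0 1)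
    (hτ : exp (-A * log (log (1 / t))) = τ) : log (1 / t) = (1 / τ) ^ (1 / A) := by
  have hlog : 0 < log (1 / t) := log_pos (one_lt_one_div ht.1 ht.2)
  have hτ' : log (1 / τ) = A * log (log (1 / t)) := by
    rw [← hτ, one_div, ← exp_neg, log_exp, neg_mul, neg_neg]
  rw [rpow_def_of_pos (by rw [← hτ]; positivity), hτ', mul_comm A, mul_assoc,
    mul_one_div_cancel hA.ne', mul_one, exp_log hlog]

theorem lt_of_log_one_div_eq_rpow {A t τ : ℝ} (hA : A ∈ Ioc 0 1) (ht : 0 < t) (hτ : τ ∈ Ioc 0 1)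
    (heq : log (1 / t) = (1 / τ) ^ (1 / A)) : t < τ := by
  have hτ_le : 1 / τ ≤ log (1 / t) :=
    heq ▸ self_le_rpow_of_one_le (one_le_one_div hτ.1 hτ.2) (one_le_one_div hA.1 hA.2)
  have hlog_lt : log (1 / τ) < log (1 / t) := by
    linarith [log_le_sub_one_of_pos (one_div_pos.2 hτ.1)]
  rwa [log_lt_log_iff (one_div_pos.2 hτ.1) (one_div_pos.2 ht), one_div_lt_one_div hτ.1 ht]
    at hlog_lt

theorem eq_exp_neg_log_one_div {t : ℝ} (ht : 0 < t) : t = exp (-log (1 / t)) := by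
  rw [one_div, log_inv, neg_neg, exp_log ht]

theorem tendsto_nhdsGT_zero_of_mem_Ioo {f : ℝ → ℝ} {τ₀ : ℝ} (hτ₀ : 0 < τ₀)
    (hf : ∀ τ ∈ Ioc 0 τ₀, f τ ∈ Ioo 0 τ) : Tendsto f (𝓝[>] 0) (𝓝[>] 0) := by
  have hf' : ∀ᶠ τ in 𝓝[>] (0 : ℝ), f τ ∈ Ioo 0 τ :=
    mem_of_superset (Ioc_mem_nhdsGT hτ₀) hf
  refine tendsto_nhdsWithin_of_tendsto_nhds_of_eventually_within _ ?_ (hf'.mono fun _ h ↦ h.1)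
  exact tendsto_of_tendsto_of_tendsto_of_le_of_le' tendsto_const_nhds
    (tendsto_nhdsWithin_of_tendsto_nhds tendsto_id) (hf'.mono fun _ h ↦ h.1.le)
    (hf'.mono fun _ h ↦ h.2.le)

theorem tendsto_two_rpow_neg_natCast_nhdsGT_zero :
    Tendsto (fun k : ℕ ↦ (2 : ℝ) ^ (-(k : ℝ))) atTop (𝓝[>] 0) := by
  simpa [rpow_neg, ← inv_pow] using
    tendsto_pow_atTop_nhdsWithin_zero_of_lt_one (r := (2 : ℝ)⁻¹) (by norm_num) (by norm_num)

theorem one_div_rpow_neg_rpow_rpow_inv {b c x : ℝ} (hb : 0 < b) (hx : x ≠ 0) :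
    ((1 / b ^ (-x)) ^ c) ^ x⁻¹ = b ^ c := by
  rw [rpow_neg hb.le, one_div, inv_inv, ← rpow_mul hb.le, ← rpow_mul hb.le, mul_comm x,
    mul_assoc, mul_inv_cancel₀ hx, mul_one]

theorem stmt14_general (α₀ t₀ : ℝ) (hα₀ : 0 < α₀) (hα₀1 : α₀ < 1)
    (ht₀1 : t₀ < 1)
    (ε h : ℝ → ℝ)
    (hεpos : ∀ t ∈ Set.Ioo (0 : ℝ) t₀, 0 < ε t ∧ ε t < 1 - α₀)
    (hεlim : Filter.Tendsto ε (nhdsWithin 0 (Set.Ioi 0)) (nhds 0))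
    (hh : ∀ t ∈ Set.Ioo (0 : ℝ) t₀,
      h t = Real.exp (-(α₀ + ε t) * Real.log (Real.log (1 / t))))
    (g : ℝ → ℝ) (τ₀ : ℝ) (hτ₀ : 0 < τ₀)
    (hg : ∀ τ ∈ Set.Ioc (0 : ℝ) τ₀, g τ ∈ Set.Ioo (0 : ℝ) t₀ ∧ h (g τ) = τ) :
    (∃ δfun : ℝ → ℝ,
      Filter.Tendsto δfun (nhdsWithin 0 (Set.Ioi 0)) (nhds 0) ∧
      ∀ᶠ τ in nhdsWithin (0 : ℝ) (Set.Ioi 0),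
        g τ = Real.exp (-((1 / τ) ^ (1 / α₀ - δfun τ)))) ∧
    Filter.Tendsto
      (fun k : ℕ => (Real.log (1 / g ((2 : ℝ) ^ (-(k : ℝ))))) ^ ((k : ℝ))⁻¹)
      Filter.atTop (nhds ((2 : ℝ) ^ (1 / α₀))) ∧
    (2 : ℝ) ^ (1 / α₀) ≠ 2 := by
  set A : ℝ → ℝ := fun τ ↦ α₀ + ε (g τ)
  have hA_mem : ∀ τ ∈ Ioc 0 τ₀, A τ ∈ Ioc 0 1 := fun τ hτ ↦ by
    have := hεpos _ (hg τ hτ).1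
    exact ⟨by linarith, by linarith⟩
  have hkey : ∀ τ ∈ Ioc 0 τ₀, log (1 / g τ) = (1 / τ) ^ (1 / A τ) := fun τ hτ ↦
    log_one_div_eq_rpow_of_exp_eq (hA_mem τ hτ).1 ⟨(hg τ hτ).1.1, (hg τ hτ).1.2.trans ht₀1⟩
      ((hh _ (hg τ hτ).1).symm.trans (hg τ hτ).2)
  have hg_tendsto : Tendsto g (𝓝[>] 0) (𝓝[>] 0) := by
    refine tendsto_nhdsGT_zero_of_mem_Ioo (lt_min hτ₀ one_pos) fun τ hτ ↦ ?_
    have hτ' : τ ∈ Ioc 0 τ₀ := ⟨hτ.1, hτ.2.trans (min_le_left _ _)⟩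
    exact ⟨(hg τ hτ').1.1, lt_of_log_one_div_eq_rpow (hA_mem τ hτ') (hg τ hτ').1.1
      ⟨hτ.1, hτ.2.trans (min_le_right _ _)⟩ (hkey τ hτ')⟩
  have hA_inv : Tendsto (fun τ ↦ 1 / A τ) (𝓝[>] 0) (𝓝 (1 / α₀)) := by
    have hA : Tendsto A (𝓝[>] 0) (𝓝 α₀) :=
      add_zero α₀ ▸ tendsto_const_nhds.add (hεlim.comp hg_tendsto)
    simpa [one_div] using hA.inv₀ hα₀.ne'
  refine ⟨⟨fun τ ↦ 1 / α₀ - 1 / A τ, 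
    by simpa using (tendsto_const_nhds (x := 1 / α₀)).sub hA_inv, ?_⟩, ?_, ?_⟩
  · filter_upwards [Ioc_mem_nhdsGT hτ₀] with τ hτ
    rw [sub_sub_cancel, ← hkey τ hτ]
    exact eq_exp_neg_log_one_div (hg τ hτ).1.1
  · have h2k := tendsto_two_rpow_neg_natCast_nhdsGT_zero
    refine (tendsto_const_nhds.rpow (hA_inv.comp h2k) (Or.inl two_ne_zero)).congr' ?_
    filter_upwards [h2k.eventually (Ioc_mem_nhdsGT hτ₀), eventually_ne_atTop 0] with k hk hk0
    rw [Function.comp_apply, hkey _ hk,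
      one_div_rpow_neg_rpow_rpow_inv two_pos (Nat.cast_ne_zero.2 hk0)]
  · exact (self_lt_rpow_of_one_lt one_lt_two (one_lt_one_div hα₀ hα₀1)).ne'

/-- For α(t) = α₀ + ε(t), 0 < α₀ < 1, ε ↘ 0, ε(t)·log log(1/t) ↗ ∞, and
h = h₀^α: the inverse satisfies h⁻¹(τ) = exp(-(1/τ)^{1/α₀ - δ(τ)}) with δ(τ) → 0,
and (log(1/h⁻¹(2^{-k})))^{1/k} → 2^{1/α₀} ≠ 2 as k → ∞. -/
theorem stmt14 (α₀ t₀ : ℝ) (hα₀ : 0 < α₀) (hα₀1 : α₀ < 1)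
    (ht₀ : 0 < t₀) (ht₀1 : t₀ < 1)
    (ε h : ℝ → ℝ)
    (hεpos : ∀ t ∈ Set.Ioo (0 : ℝ) t₀, 0 < ε t ∧ ε t < 1 - α₀)
    (hεmono : MonotoneOn ε (Set.Ioo 0 t₀))
    (hεlim : Filter.Tendsto ε (nhdsWithin 0 (Set.Ioi 0)) (nhds 0))
    (hεlog_mono : AntitoneOn (fun t => ε t * Real.log (Real.log (1 / t))) (Set.Ioo 0 t₀))
    (hεlog : Filter.Tendsto (fun t => ε t * Real.log (Real.log (1 / t)))
      (nhdsWithin 0 (Set.Ioi 0)) Filter.atTop)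
    (hh : ∀ t ∈ Set.Ioo (0 : ℝ) t₀,
      h t = Real.exp (-(α₀ + ε t) * Real.log (Real.log (1 / t))))
    (hhmono : StrictMonoOn h (Set.Ioo 0 t₀))
    (g : ℝ → ℝ) (τ₀ : ℝ) (hτ₀ : 0 < τ₀)
    (hg : ∀ τ ∈ Set.Ioc (0 : ℝ) τ₀, g τ ∈ Set.Ioo (0 : ℝ) t₀ ∧ h (g τ) = τ) :
    (∃ δfun : ℝ → ℝ,
      Filter.Tendsto δfun (nhdsWithin 0 (Set.Ioi 0)) (nhds 0) ∧
      ∀ᶠ τ in nhdsWithin (0 : ℝ) (Set.Ioi 0),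
        g τ = Real.exp (-((1 / τ) ^ (1 / α₀ - δfun τ)))) ∧
    Filter.Tendsto
      (fun k : ℕ => (Real.log (1 / g ((2 : ℝ) ^ (-(k : ℝ))))) ^ ((k : ℝ))⁻¹)
      Filter.atTop (nhds ((2 : ℝ) ^ (1 / α₀))) ∧
    (2 : ℝ) ^ (1 / α₀) ≠ 2 :=
  stmt14_general α₀ t₀ hα₀ hα₀1 ht₀1 ε h hεpos hεlim hh g τ₀ hτ₀ hg
end
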